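/- arXiv:1812.06951 — 2 statements merged into one kernel-verified Lean document; each statement's English description precedes it below -/
import Mathlib

section
/- Let n' ≥ 1 and let [1, n'] be partitioned in two ways into consecutive integer intervals Q_1 < Q_2 < ... < Q_k and R_1 < R_2 < ... < R_m, each interval of size at most b. Then there exists a set A ⊆ [1, n'] with |A| ≥ n'/b such that A contains at most one element from each Q_j and at most one element from each R_l. -/
/-!
Walk greedily through `[1, n']`: from the current point `x`, jump to the first point `y` lying
beyond both the `Q`-block and the `R`-block containing `x`. Every jump has length at most `b`,
so at least `n'/b` points are visited, and since no later point shares a block with an earlier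
one, the visited points form a common transversal.
-/

open Finset

def IsPartialTransversal (𝓑 : Set (Finset ℕ)) (A : Finset ℕ) : Prop :=
  ∀ B ∈ 𝓑, (A ∩ B).card ≤ 1

theorem IsPartialTransversal.insert {𝓑 : Set (Finset ℕ)} {A : Finset ℕ} {x : ℕ}
    (hA : IsPartialTransversal 𝓑 A) (hx : ∀ B ∈ 𝓑, x ∈ B → Disjoint A B) :
    IsPartialTransversal 𝓑 (insert x A) := by
  intro B hB
  by_cases hxB : x ∈ B
  · rw [Finset.insert_inter_of_mem hxB, disjoint_iff_inter_eq_empty.mp (hx B hB hxB)]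
    exact (card_singleton x).le
  · rw [Finset.insert_inter_of_notMem hxB]
    exact hA B hB

theorem exists_partialTransversal_of_forall_exists_jump {𝓑 : Set (Finset ℕ)} {b : ℝ} {a n : ℕ}
    (hjump : ∀ x ∈ Icc a n, ∃ y, x < y ∧ (y : ℝ) ≤ x + b ∧ ∀ B ∈ 𝓑, x ∈ B → ∀ z ∈ B, z < y) :
    ∃ A ⊆ Icc a n, (n + 1 - a : ℝ) ≤ b * A.card ∧ IsPartialTransversal 𝓑 A := by
  by_cases han : n < a
  · refine ⟨∅, empty_subset _, ?_, fun B _ => by simp⟩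
    have : (n : ℝ) + 1 ≤ a := by exact_mod_cast han
    simp only [card_empty, Nat.cast_zero, mul_zero]
    linarith
  obtain ⟨y, hay, hyb, hbelow⟩ := hjump a (mem_Icc.mpr ⟨le_rfl, not_lt.mp han⟩)
  obtain ⟨A, hAsub, hAcard, hA⟩ := exists_partialTransversal_of_forall_exists_jump
    (a := y) (n := n) fun x hx => hjump x (Icc_subset_Icc_left hay.le hx)
  have haA : a ∉ A := fun ha => by have := (mem_Icc.mp (hAsub ha)).1; omega
  refine ⟨insert a A, insert_subset (mem_Icc.mpr ⟨le_rfl, not_lt.mp han⟩)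
    (hAsub.trans (Icc_subset_Icc_left hay.le)), ?_, hA.insert fun B hB haB => ?_⟩
  · rw [card_insert_of_notMem haA, Nat.cast_succ]
    linarith
  · refine disjoint_left.mpr fun z hzA hzB => ?_
    have := (mem_Icc.mp (hAsub hzA)).1
    have := hbelow B hB haB z hzB
    omega
termination_by n + 1 - a
decreasing_by omega

def cutBlocks (c : ℕ → ℕ) (k : ℕ) : Set (Finset ℕ) :=
  (fun i => Ico (c i) (c (i + 1))) '' Set.Iio k

theorem exists_lt_and_mem_Ico_of_cuts (c : ℕ → ℕ) {k x : ℕ} (h0 : c 0 ≤ x) (hk : x < c k) :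
    ∃ i < k, x ∈ Ico (c i) (c (i + 1)) := by
  induction k with
  | zero => omega
  | succ k ih =>
    by_cases hxk : x < c k
    · obtain ⟨i, hi, hx⟩ := ih hxk
      exact ⟨i, by omega, hx⟩
    · exact ⟨k, by omega, mem_Ico.mpr ⟨not_lt.mp hxk, hk⟩⟩

theorem exists_cutBlocks_jump {c : ℕ → ℕ} {k x : ℕ} {b : ℝ}
    (hmono : ∀ i < k, c i < c (i + 1)) (hsize : ∀ i < k, ((c (i + 1) - c i : ℕ) : ℝ) ≤ b)
    (h0 : c 0 ≤ x) (hk : x < c k) :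
    ∃ y, x < y ∧ (y : ℝ) ≤ x + b ∧ ∀ B ∈ cutBlocks c k, x ∈ B → ∀ z ∈ B, z < y := by
  obtain ⟨i, hi, hxi⟩ := exists_lt_and_mem_Ico_of_cuts c h0 hk
  have hcut : StrictMonoOn c (Set.Iic k) := strictMonoOn_Iic_of_lt_succ hmono
  rw [mem_Ico] at hxi
  refine ⟨c (i + 1), hxi.2, ?_, ?_⟩
  · have := hsize i hi
    rw [Nat.cast_sub (hmono i hi).le] at this
    have : (c i : ℝ) ≤ x := by exact_mod_cast hxi.1
    linarith
  · rintro _ ⟨j, hj, rfl⟩ hxj z hz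
    rw [mem_Ico] at hxj hz
    have hji : j < i + 1 := (hcut.lt_iff_lt (Set.mem_Iic.mpr hj.le) (Set.mem_Iic.mpr hi)).mp
      (by omega : c j < c (i + 1))
    have hij : i < j + 1 := (hcut.lt_iff_lt (Set.mem_Iic.mpr hi.le) (Set.mem_Iic.mpr hj)).mp
      (by omega : c i < c (j + 1))
    obtain rfl : j = i := by omega
    exact hz.2

theorem common_transversal_of_interval_partitions_general
    (n' : ℕ) (b : ℝ)
    (k m : ℕ) (qc rc : ℕ → ℕ)
    (hq0 : qc 0 = 1) (hqk : qc k = n' + 1)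
    (hqmono : ∀ i < k, qc i < qc (i + 1))
    (hqsize : ∀ i < k, ((qc (i + 1) - qc i : ℕ) : ℝ) ≤ b)
    (hr0 : rc 0 = 1) (hrm : rc m = n' + 1)
    (hrmono : ∀ j < m, rc j < rc (j + 1))
    (hrsize : ∀ j < m, ((rc (j + 1) - rc j : ℕ) : ℝ) ≤ b) :
    ∃ A : Finset ℕ, A ⊆ Finset.Icc 1 n' ∧ (n' : ℝ) / b ≤ A.card ∧
      (∀ i < k, (A ∩ Finset.Ico (qc i) (qc (i + 1))).card ≤ 1) ∧
      (∀ j < m, (A ∩ Finset.Ico (rc j) (rc (j + 1))).card ≤ 1) := by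
  have hjump : ∀ x ∈ Icc 1 n', ∃ y, x < y ∧ (y : ℝ) ≤ x + b ∧
      ∀ B ∈ cutBlocks qc k ∪ cutBlocks rc m, x ∈ B → ∀ z ∈ B, z < y := by
    intro x hx
    rw [mem_Icc] at hx
    obtain ⟨y, hxy, hyb, hQ⟩ :=
      exists_cutBlocks_jump hqmono hqsize (by omega : qc 0 ≤ x) (by omega : x < qc k)
    obtain ⟨y', -, hyb', hR⟩ :=
      exists_cutBlocks_jump hrmono hrsize (by omega : rc 0 ≤ x) (by omega : x < rc m)
    refine ⟨max y y', lt_max_of_lt_left hxy, by push_cast; exact max_le hyb hyb', ?_⟩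
    rintro B (hB | hB) hxB z hz
    · exact lt_max_of_lt_left (hQ B hB hxB z hz)
    · exact lt_max_of_lt_right (hR B hB hxB z hz)
  obtain ⟨A, hA, hcard, htrans⟩ := exists_partialTransversal_of_forall_exists_jump hjump
  refine ⟨A, hA, ?_, fun i hi => htrans _ (Or.inl ⟨i, hi, rfl⟩),
    fun j hj => htrans _ (Or.inr ⟨j, hj, rfl⟩)⟩
  rcases le_or_gt b 0 with hb | hb
  · exact (div_nonpos_of_nonneg_of_nonpos n'.cast_nonneg hb).trans A.card.cast_nonneg
  · rw [div_le_iff₀ hb]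
    push_cast at hcard
    linarith

/-- Two interval partitions of `[1, n']` into consecutive blocks of size at most `b`
admit a common transversal `A` of size at least `n'/b`, meeting every block of
either partition in at most one element.  The partitions are encoded by their
cut sequences `qc` and `rc`: the blocks are `[qc i, qc (i+1))` for `i < k`, with
`qc 0 = 1` and `qc k = n' + 1` (similarly for `rc` with `m` blocks). -/
theorem common_transversal_of_interval_partitions
    (n' : ℕ) (hn' : 1 ≤ n') (b : ℝ)
    (k m : ℕ) (qc rc : ℕ → ℕ)
    (hq0 : qc 0 = 1) (hqk : qc k = n' + 1)
    (hqmono : ∀ i < k, qc i < qc (i + 1))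
    (hqsize : ∀ i < k, ((qc (i + 1) - qc i : ℕ) : ℝ) ≤ b)
    (hr0 : rc 0 = 1) (hrm : rc m = n' + 1)
    (hrmono : ∀ j < m, rc j < rc (j + 1))
    (hrsize : ∀ j < m, ((rc (j + 1) - rc j : ℕ) : ℝ) ≤ b) :
    ∃ A : Finset ℕ, A ⊆ Finset.Icc 1 n' ∧ (n' : ℝ) / b ≤ A.card ∧
      (∀ i < k, (A ∩ Finset.Ico (qc i) (qc (i + 1))).card ≤ 1) ∧
      (∀ j < m, (A ∩ Finset.Ico (rc j) (rc (j + 1))).card ≤ 1) :=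
  common_transversal_of_interval_partitions_general n' b k m qc rc hq0 hqk hqmono hqsize hr0 hrm
    hrmono hrsize
end

section
/- Gluing agreement along an incomparable ordered partition: Let (X_1, ..., X_p) be an ordered partition of X, and let T' and S' be rooted binary X-trees such that (a) for all 1 ≤ i < p, lca_{T'}(X_i) is incomparable with lca_{T'}(X_{i+1} ∪ ... ∪ X_p); (b) the same holds in S'; and (c) T'|X_i = S'|X_i for all i. Then T' = S'. -/
/-- Rooted binary trees with leaves labeled by `X` (with designated left/right children). -/
inductive BTree (X : Type) where
  | leaf : X → BTree X
  | node : BTree X → BTree X → BTree X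

namespace BTree

variable {X : Type} [DecidableEq X]

/-- Left-to-right (pre-order) leaf sequence. -/
def seq : BTree X → List X
  | leaf x => [x]
  | node l r => seq l ++ seq r

/-- Leaf set. -/
def leaves (t : BTree X) : Finset X := t.seq.toFinset

/-- Number of leaves. -/
def size (t : BTree X) : ℕ := t.seq.length

/-- A phylogenetic tree: leaves are bijectively labeled (no repeated labels). -/
def Phylo (t : BTree X) : Prop := t.seq.Nodup

def isLeaf : BTree X → Prop
  | leaf _ => True
  | node _ _ => False

/-- A rooted caterpillar: every internal node (including the root) has a leaf child. -/
def isCaterpillar : BTree X → Prop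
  | leaf _ => True
  | node l r => (isLeaf l ∧ isCaterpillar r) ∨ (isLeaf r ∧ isCaterpillar l)

/-- A perfectly balanced binary tree. -/
def isPerfect : BTree X → Prop
  | leaf _ => True
  | node l r => isPerfect l ∧ isPerfect r ∧ size l = size r

/-- Restriction `T|A`: minimal subtree spanning the leaves in `A`, with degree-two
vertices suppressed; `none` if `A` contains no leaf of the tree. -/
def restrict : BTree X → Finset X → Option (BTree X)
  | leaf x, A => if x ∈ A then some (leaf x) else none
  | node l r, A =>
    match restrict l A, restrict r A with
    | some l', some r' => some (node l' r')
    | some l', none => some l'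
    | none, some r' => some r'
    | none, none => none

/-- Nodes of a tree are addressed by root-paths: `false` = go left, `true` = go right.
`subtreeAt t p` is the subtree rooted at the node with address `p` (if it exists). -/
def subtreeAt : BTree X → List Bool → Option (BTree X)
  | t, [] => some t
  | leaf _, _ :: _ => none
  | node l _, false :: p => subtreeAt l p
  | node _ r, true :: p => subtreeAt r p

/-- Address of the least common ancestor of a set of leaves. -/
def lcaPos : BTree X → Finset X → List Bool
  | leaf _, _ => []
  | node l r, A =>
    if A ⊆ l.leaves then false :: lcaPos l A
    else if A ⊆ r.leaves then true :: lcaPos r A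
    else []

/-- `v ⪯ u` in the ancestor order iff the address of `u` is a prefix of the address of `v`.
Two nodes are incomparable if neither address is a prefix of the other. -/
def Incomp (p q : List Bool) : Prop := ¬ p <+: q ∧ ¬ q <+: p

/-- `StrictBelow p q`: the node at address `p` is a strict descendant of the node at `q`. -/
def StrictBelow (p q : List Bool) : Prop := q <+: p ∧ p ≠ q

/-- Identity of rooted phylogenetic trees: label-preserving graph isomorphism
(the left/right designation is irrelevant). -/
def REq : BTree X → BTree X → Prop
  | leaf x, leaf y => x = y
  | node l r, node l' r' => (REq l l' ∧ REq r r') ∨ (REq l r' ∧ REq r l')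
  | _, _ => False

/-- The splits (edge-induced leaf bipartitions, each recorded by both of its sides)
of the unrooted tree obtained by de-rooting `t`. -/
def usplits (t : BTree X) : Set (Finset X) :=
  { A | ∃ p u, t.subtreeAt p = some u ∧ (A = u.leaves ∨ A = t.leaves \ u.leaves) }

/-- `t` and `s` de-root to identical unrooted phylogenetic trees. -/
def UEq (t s : BTree X) : Prop := t.leaves = s.leaves ∧ usplits t = usplits s

/-- Rooted agreement of `t` and `s` on leaf set `A`: `t|A = s|A` as rooted trees. -/
def RAgree (t s : BTree X) (A : Finset X) : Prop :=
  ∃ t' s', t.restrict A = some t' ∧ s.restrict A = some s' ∧ REq t' s'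

/-- Unrooted agreement of (the de-rootings of) `t` and `s` on leaf set `A`. -/
def UAgree (t s : BTree X) (A : Finset X) : Prop :=
  ∃ t' s', t.restrict A = some t' ∧ s.restrict A = some s' ∧ UEq t' s'

/-- `t` de-roots to an unrooted caterpillar. -/
def UCaterpillar (t : BTree X) : Prop := ∃ c : BTree X, isCaterpillar c ∧ UEq c t

/-- The subtrees hanging off the path from the left-most leaf to the root
(`Q_1, …, Q_k` in the paper; `Q_1` is the left-most leaf itself). -/
def leftSpine : BTree X → List (BTree X)
  | leaf x => [leaf x]
  | node l r => leftSpine l ++ [r]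

/-- The subtrees hanging off the path from the root to the right-most leaf
(`R_1, …, R_m` in the paper; `R_m` is the right-most leaf itself). -/
def rightSpine : BTree X → List (BTree X)
  | leaf x => [leaf x]
  | node l r => l :: rightSpine r

/-- Graph distance (number of edges) between leaves `x` and `y` in the unrooted
tree obtained by de-rooting `t` (the suppressed root accounts for the `-1`). -/
def udist (t : BTree X) (x y : X) : ℕ :=
  (lcaPos t {x}).length - (lcaPos t {x, y}).length +
    ((lcaPos t {y}).length - (lcaPos t {x, y}).length) -
    (if lcaPos t {x, y} = [] then 1 else 0)

end BTree

/-!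
If the leaf set of `t` is `A ∪ B` and `lca(A)`, `lca(B)` are incomparable, then neither is the
root, so each of `A`, `B` lies below one child of the root, and not both below the same one;
hence `A` and `B` are exactly the leaf sets of the two children. Applied to `A = X₁` and
`B = X₂ ∪ ⋯ ∪ Xₚ`, both trees split at the root into a part on `X₁`, where they agree by
hypothesis, and a part on `B`, to which all hypotheses restrict, so induction on `p` applies.
-/

theorem Finset.eq_of_union_eq_union {α : Type*} [DecidableEq α] {A B l r : Finset α}
    (hlr : Disjoint l r) (h : A ∪ B = l ∪ r) (hA : A ⊆ l) (hB : B ⊆ r) : A = l ∧ B = r := by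
  have hl : l ⊆ A ∪ B := h ▸ subset_union_left
  have hr : r ⊆ A ∪ B := h ▸ subset_union_right
  refine ⟨hA.antisymm fun x hx => ?_, hB.antisymm fun x hx => ?_⟩
  · exact (mem_union.mp (hl hx)).resolve_right fun hxB => disjoint_left.mp hlr hx (hB hxB)
  · exact (mem_union.mp (hr hx)).resolve_left fun hxA => disjoint_left.mp hlr (hA hxA) hx

namespace List

variable {α : Type*} [DecidableEq α] {P : List (Finset α)}

theorem mem_foldr_union {x : α} : x ∈ P.foldr (· ∪ ·) ∅ ↔ ∃ p ∈ P, x ∈ p := by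
  induction P <;> simp [*]

theorem subset_foldr_union {p : Finset α} (hp : p ∈ P) : p ⊆ P.foldr (· ∪ ·) ∅ :=
  fun _ hx => mem_foldr_union.mpr ⟨p, hp, hx⟩

theorem foldr_union_subset {S : Finset α} (h : ∀ p ∈ P, p ⊆ S) : P.foldr (· ∪ ·) ∅ ⊆ S :=
  fun _ hx => let ⟨p, hp, hxp⟩ := mem_foldr_union.mp hx; h p hp hxp

theorem foldr_union_nonempty (h : ∃ p ∈ P, p.Nonempty) : (P.foldr (· ∪ ·) ∅).Nonempty :=
  let ⟨_, hp, hne⟩ := h; hne.mono (subset_foldr_union hp)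

end List

namespace BTree

theorem rEq_of_children {X : Type} {t s a b c d : BTree X} (ht : t = node a b ∨ t = node b a)
    (hs : s = node c d ∨ s = node d c) (hac : REq a c) (hbd : REq b d) : REq t s := by
  rcases ht with rfl | rfl <;> rcases hs with rfl | rfl
  exacts [Or.inl ⟨hac, hbd⟩, Or.inr ⟨hac, hbd⟩, Or.inr ⟨hbd, hac⟩, Or.inl ⟨hbd, hac⟩]

variable {X : Type} [DecidableEq X]

theorem leaves_node (l r : BTree X) : (node l r).leaves = l.leaves ∪ r.leaves := by
  simp [leaves, seq]

theorem leaves_nonempty (t : BTree X) : t.leaves.Nonempty := by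
  induction t with
  | leaf x => exact ⟨x, by simp [leaves, seq]⟩
  | node l r ihl _ => exact (leaves_node l r).symm ▸ ihl.mono Finset.subset_union_left

theorem phylo_node_iff {l r : BTree X} :
    (node l r).Phylo ↔ l.Phylo ∧ r.Phylo ∧ Disjoint l.leaves r.leaves := by
  simp only [Phylo, seq, List.nodup_append, leaves, Finset.disjoint_left, List.mem_toFinset]
  grind

theorem restrict_eq_self {t : BTree X} {A : Finset X} (h : t.leaves ⊆ A) :
    t.restrict A = some t := by
  induction t with
  | leaf x => simp [restrict, h (by simp [leaves, seq] : x ∈ (leaf x).leaves)]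
  | node l r ihl ihr =>
    rw [leaves_node, Finset.union_subset_iff] at h
    simp only [restrict, ihl h.1, ihr h.2]

theorem restrict_eq_none {t : BTree X} {A : Finset X} (h : Disjoint t.leaves A) :
    t.restrict A = none := by
  induction t with
  | leaf x =>
    simp [restrict, Finset.disjoint_left.mp h (by simp [leaves, seq] : x ∈ (leaf x).leaves)]
  | node l r ihl ihr =>
    rw [leaves_node, Finset.disjoint_union_left] at h
    simp only [restrict, ihl h.1, ihr h.2]

theorem restrict_node_of_disjoint_left {l r : BTree X} {A : Finset X}
    (h : Disjoint l.leaves A) : (node l r).restrict A = r.restrict A := by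
  simp only [restrict, restrict_eq_none h]
  cases r.restrict A <;> rfl

theorem restrict_node_of_disjoint_right {l r : BTree X} {A : Finset X}
    (h : Disjoint r.leaves A) : (node l r).restrict A = l.restrict A := by
  simp only [restrict, restrict_eq_none h]
  cases l.restrict A <;> rfl

theorem lcaPos_node_of_subset_left {l r : BTree X} {A : Finset X} (h : A ⊆ l.leaves) :
    lcaPos (node l r) A = false :: lcaPos l A := by
  simp [lcaPos, h]

theorem lcaPos_node_of_subset_right {l r : BTree X} {A : Finset X}
    (hl : Disjoint l.leaves A) (hA : A.Nonempty) (hr : A ⊆ r.leaves) :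
    lcaPos (node l r) A = true :: lcaPos r A := by
  have : ¬ A ⊆ l.leaves := fun h => hA.ne_empty (hl.symm.eq_bot_of_le h)
  simp [lcaPos, this, hr]

theorem subset_or_subset_of_lcaPos_ne_nil {l r : BTree X} {A : Finset X}
    (h : lcaPos (node l r) A ≠ []) : A ⊆ l.leaves ∨ A ⊆ r.leaves := by
  by_contra! hc
  simp [lcaPos, hc.1, hc.2] at h

theorem Incomp.ne_nil_left {p q : List Bool} (h : Incomp p q) : p ≠ [] :=
  fun e => h.1 (e ▸ List.nil_prefix)

theorem Incomp.ne_nil_right {p q : List Bool} (h : Incomp p q) : q ≠ [] :=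
  fun e => h.2 (e ▸ List.nil_prefix)

theorem Incomp.of_cons {b : Bool} {p q : List Bool} (h : Incomp (b :: p) (b :: q)) :
    Incomp p q :=
  ⟨fun hpq => h.1 (List.cons_prefix_cons.mpr ⟨rfl, hpq⟩),
    fun hqp => h.2 (List.cons_prefix_cons.mpr ⟨rfl, hqp⟩)⟩

theorem RAgree.rEq {t s t' s' : BTree X} {A : Finset X} (h : RAgree t s A)
    (ht : t.restrict A = some t') (hs : s.restrict A = some s') : REq t' s' := by
  obtain ⟨u, v, hu, hv, huv⟩ := h
  rw [ht, Option.some.injEq] at hu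
  rw [hs, Option.some.injEq] at hv
  exact hu ▸ hv ▸ huv

section Children

variable {t a b : BTree X}

theorem phylo_of_children (h : t = node a b ∨ t = node b a) (ht : t.Phylo) :
    a.Phylo ∧ b.Phylo ∧ Disjoint a.leaves b.leaves := by
  rcases h with rfl | rfl
  · exact phylo_node_iff.mp ht
  · obtain ⟨hb, ha, hba⟩ := phylo_node_iff.mp ht
    exact ⟨ha, hb, hba.symm⟩

theorem restrict_of_child (h : t = node a b ∨ t = node b a) (hab : Disjoint a.leaves b.leaves)
    {C : Finset X} (hC : C ⊆ b.leaves) : t.restrict C = b.restrict C := by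
  rcases h with rfl | rfl
  · exact restrict_node_of_disjoint_left (hab.mono_right hC)
  · exact restrict_node_of_disjoint_right (hab.mono_right hC)

theorem restrict_leaves_child (h : t = node a b ∨ t = node b a)
    (hab : Disjoint a.leaves b.leaves) : t.restrict b.leaves = some b :=
  (restrict_of_child h hab subset_rfl).trans (restrict_eq_self subset_rfl)

theorem RAgree.of_children {s c d : BTree X} {C : Finset X}
    (ht : t = node a b ∨ t = node b a) (hs : s = node c d ∨ s = node d c)
    (hab : Disjoint a.leaves b.leaves) (hcd : Disjoint c.leaves d.leaves)
    (hCb : C ⊆ b.leaves) (hCd : C ⊆ d.leaves) (h : RAgree t s C) : RAgree b d C := by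
  rwa [RAgree, ← restrict_of_child ht hab hCb, ← restrict_of_child hs hcd hCd]

theorem exists_lcaPos_eq_cons_of_child (h : t = node a b ∨ t = node b a)
    (hab : Disjoint a.leaves b.leaves) :
    ∃ d : Bool, ∀ C : Finset X, C.Nonempty → C ⊆ b.leaves → lcaPos t C = d :: lcaPos b C := by
  rcases h with rfl | rfl
  · exact ⟨true, fun C hC hCb => lcaPos_node_of_subset_right (hab.mono_right hCb) hC hCb⟩
  · exact ⟨false, fun C _ hCb => lcaPos_node_of_subset_left hCb⟩

end Children

theorem exists_children_of_incomp {t : BTree X} {A B : Finset X} (ht : t.Phylo)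
    (hcov : A ∪ B = t.leaves) (h : Incomp (lcaPos t A) (lcaPos t B)) :
    ∃ a b : BTree X, a.leaves = A ∧ b.leaves = B ∧ (t = node a b ∨ t = node b a) := by
  cases t with
  | leaf x => exact (h.ne_nil_left rfl).elim
  | node l r =>
    obtain ⟨-, -, hlr⟩ := phylo_node_iff.mp ht
    rw [leaves_node] at hcov
    have hsub {u : Finset X} (hA : A ⊆ u) (hB : B ⊆ u) : l.leaves ∪ r.leaves ⊆ u :=
      hcov ▸ Finset.union_subset hA hB
    rcases subset_or_subset_of_lcaPos_ne_nil h.ne_nil_left with hAl | hAr <;>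
      rcases subset_or_subset_of_lcaPos_ne_nil h.ne_nil_right with hBl | hBr
    · exact ((leaves_nonempty r).ne_empty
        (hlr.symm.eq_bot_of_le (Finset.subset_union_right.trans (hsub hAl hBl)))).elim
    · obtain ⟨rfl, rfl⟩ := Finset.eq_of_union_eq_union hlr hcov hAl hBr
      exact ⟨l, r, rfl, rfl, .inl rfl⟩
    · obtain ⟨rfl, rfl⟩ := Finset.eq_of_union_eq_union hlr
        (by rw [Finset.union_comm, hcov]) hBl hAr
      exact ⟨r, l, rfl, rfl, .inr rfl⟩
    · exact ((leaves_nonempty l).ne_empty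
        (hlr.eq_bot_of_le (Finset.subset_union_left.trans (hsub hAr hBr)))).elim

/-- Condition (a) of the paper, in the indexed form of the theorem. -/
def IncompSuffixes (t : BTree X) (P : List (Finset X)) : Prop :=
  ∀ i (h : i + 1 < P.length),
    Incomp (lcaPos t (P.get ⟨i, Nat.lt_of_succ_lt h⟩))
      (lcaPos t ((P.drop (i + 1)).foldr (· ∪ ·) ∅))

namespace IncompSuffixes

variable {t : BTree X} {A B : Finset X} {P : List (Finset X)}

theorem head (h : IncompSuffixes t (A :: B :: P)) :
    Incomp (lcaPos t A) (lcaPos t ((B :: P).foldr (· ∪ ·) ∅)) :=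
  h 0 (by simp)

theorem tail (h : IncompSuffixes t (A :: P)) : IncompSuffixes t P :=
  fun i hi => h (i + 1) (by simpa using hi)

theorem of_child {a b : BTree X} (ht : t = node a b ∨ t = node b a)
    (hab : Disjoint a.leaves b.leaves) (hP : ∀ p ∈ P, p.Nonempty ∧ p ⊆ b.leaves)
    (h : IncompSuffixes t P) : IncompSuffixes b P := by
  obtain ⟨d, hd⟩ := exists_lcaPos_eq_cons_of_child ht hab
  intro i hi
  have hblock := hP _ (P.get_mem ⟨i, Nat.lt_of_succ_lt hi⟩)
  obtain ⟨p, hp⟩ :=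
    List.exists_mem_of_ne_nil (P.drop (i + 1)) (by simpa [List.drop_eq_nil_iff] using hi)
  have hsuffix := h i hi
  rw [hd _ hblock.1 hblock.2,
    hd _ (List.foldr_union_nonempty ⟨p, hp, (hP p (List.mem_of_mem_drop hp)).1⟩)
    (List.foldr_union_subset fun q hq => (hP q (List.mem_of_mem_drop hq)).2)] at hsuffix
  exact hsuffix.of_cons

end IncompSuffixes

end BTree

open BTree

theorem glue_agreement_along_incomparable_partition_general {X : Type} [DecidableEq X]
    (t s : BTree X) (ht : t.Phylo) (hs : s.Phylo) (hls : t.leaves = s.leaves)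
    (P : List (Finset X))
    (hne : ∀ p ∈ P, p.Nonempty)
    (hcov : P.foldr (· ∪ ·) ∅ = t.leaves)
    (hT : ∀ i (h : i + 1 < P.length),
      Incomp (lcaPos t (P.get ⟨i, Nat.lt_of_succ_lt h⟩))
        (lcaPos t ((P.drop (i + 1)).foldr (· ∪ ·) ∅)))
    (hS : ∀ i (h : i + 1 < P.length),
      Incomp (lcaPos s (P.get ⟨i, Nat.lt_of_succ_lt h⟩))
        (lcaPos s ((P.drop (i + 1)).foldr (· ∪ ·) ∅)))
    (hres : ∀ p ∈ P, RAgree t s p) :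
    REq t s := by
  change IncompSuffixes t P at hT
  change IncompSuffixes s P at hS
  induction P generalizing t s with
  | nil => exact ((leaves_nonempty t).ne_empty hcov.symm).elim
  | cons A P ih =>
    cases P with
    | nil =>
      rw [List.foldr_cons, List.foldr_nil, Finset.union_empty] at hcov
      exact (hres A (by simp)).rEq (restrict_eq_self hcov.ge) (restrict_eq_self (hls ▸ hcov.ge))
    | cons B P =>
      obtain ⟨tA, tU, rfl, htU, ht_eq⟩ := exists_children_of_incomp ht hcov hT.head
      obtain ⟨sA, sU, hsA, hsU, hs_eq⟩ := exists_children_of_incomp hs (hcov.trans hls) hS.head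
      obtain ⟨-, htU', htAU⟩ := phylo_of_children ht_eq ht
      obtain ⟨-, hsU', hsAU⟩ := phylo_of_children hs_eq hs
      have hPt : ∀ p ∈ B :: P, p.Nonempty ∧ p ⊆ tU.leaves :=
        fun p hp => ⟨hne p (.tail _ hp), htU ▸ List.subset_foldr_union hp⟩
      have hPs : ∀ p ∈ B :: P, p.Nonempty ∧ p ⊆ sU.leaves :=
        fun p hp => ⟨hne p (.tail _ hp), hsU ▸ List.subset_foldr_union hp⟩
      have hA : REq tA sA := (hres _ (.head _)).rEq (restrict_leaves_child ht_eq.symm htAU.symm)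
        (hsA ▸ restrict_leaves_child hs_eq.symm hsAU.symm)
      have hU : REq tU sU := ih tU sU htU' hsU' (htU.trans hsU.symm)
        (fun p hp => hne p (.tail _ hp)) htU.symm
        (fun p hp => (hres p (.tail _ hp)).of_children ht_eq hs_eq htAU hsAU
          (hPt p hp).2 (hPs p hp).2)
        (hT.tail.of_child ht_eq htAU hPt) (hS.tail.of_child hs_eq hsAU hPs)
      exact rEq_of_children ht_eq hs_eq hA hU

/-- Gluing agreement along an incomparable ordered partition (Observation 3):
if `(X_1, …, X_p)` is an ordered partition of the common leaf set of rooted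
binary trees `t` and `s` such that in both trees `lca(X_i)` is incomparable with
`lca(X_{i+1} ∪ ⋯ ∪ X_p)` for every `i < p`, and `t|X_i = s|X_i` for all `i`, then
`t = s`. -/
theorem glue_agreement_along_incomparable_partition {X : Type} [DecidableEq X]
    (t s : BTree X) (ht : t.Phylo) (hs : s.Phylo) (hls : t.leaves = s.leaves)
    (P : List (Finset X))
    (hne : ∀ p ∈ P, p.Nonempty)
    (hdisj : P.Pairwise Disjoint)
    (hcov : P.foldr (· ∪ ·) ∅ = t.leaves)
    (hT : ∀ i (h : i + 1 < P.length),
      Incomp (lcaPos t (P.get ⟨i, Nat.lt_of_succ_lt h⟩))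
        (lcaPos t ((P.drop (i + 1)).foldr (· ∪ ·) ∅)))
    (hS : ∀ i (h : i + 1 < P.length),
      Incomp (lcaPos s (P.get ⟨i, Nat.lt_of_succ_lt h⟩))
        (lcaPos s ((P.drop (i + 1)).foldr (· ∪ ·) ∅)))
    (hres : ∀ p ∈ P, RAgree t s p) :
    REq t s :=
  glue_agreement_along_incomparable_partition_general t s ht hs hls P hne hcov hT hS hres
end
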